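/- For A, B, C real with C > A + B and C not a nonpositive integer, the Gauss hypergeometric series ₂F₁(A, B, C; z) = ∑_{n≥0} (A)_n (B)_n / ((C)_n n!) z^n converges absolutely at z = 1 and ₂F₁(A, B, C; 1) = Γ(C)Γ(C−A−B) / (Γ(C−A)Γ(C−B)). -/

import Mathlib

/-!
The contiguous relation `c (c - a - b) F(a, b; c) = (c - a) (c - b) F(a, b; c + 1)` at `z = 1`
comes from a termwise identity whose remainder `n Tₙ` telescopes away, because Euler's limit
formula for `Γ` gives `Tₙ ~ Γ(c) / (Γ(a) Γ(b)) · n ^ (a + b - c - 1)`. Iterating it `m` times,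
`F(a, b; c) = (c - a)ₘ (c - b)ₘ / ((c)ₘ (c - a - b)ₘ) · F(a, b; c + m)`. As `m → ∞` the Pochhammer
quotient tends to `Γ(c) Γ(c - a - b) / (Γ(c - a) Γ(c - b))`, again by Euler's limit formula, while
`F(a, b; c + m) → 1` by dominated convergence of the series (Tannery's theorem).
-/

open Real Filter Set Topology

/-- Rising factorial (Pochhammer symbol) `(x)_n`. -/
noncomputable def poch (x : ℝ) (n : ℕ) : ℝ := (ascPochhammer ℝ n).eval x

/-- Gauss hypergeometric series `₂F₁(A,B,C;z)`. -/
noncomputable def hyp (A B C z : ℝ) : ℝ :=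
  ∑' n : ℕ, poch A n * poch B n / (poch C n * (n.factorial : ℝ)) * z ^ n

open Asymptotics

lemma poch_zero (x : ℝ) : poch x 0 = 1 := by simp [poch]

lemma poch_succ (x : ℝ) (n : ℕ) : poch x (n + 1) = poch x n * (x + n) :=
  ascPochhammer_succ_eval n x

lemma poch_succ' (x : ℝ) (n : ℕ) : poch x (n + 1) = x * poch (x + 1) n := by
  simp [poch, ascPochhammer_succ_left, Polynomial.eval_comp]

lemma poch_eq_prod (x : ℝ) (n : ℕ) : poch x n = ∏ j ∈ Finset.range n, (x + j) := by
  induction n with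
  | zero => simp [poch_zero]
  | succ n ih => rw [poch_succ, Finset.prod_range_succ, ih]

lemma poch_ne_zero {x : ℝ} (hx : ∀ k : ℕ, x ≠ -k) (n : ℕ) : poch x n ≠ 0 := by
  rw [poch, Ne, ascPochhammer_eval_eq_zero_iff]
  rintro ⟨k, -, hk⟩
  exact hx k (by linarith)

lemma poch_pos {x : ℝ} (hx : 0 < x) (n : ℕ) : 0 < poch x n := ascPochhammer_pos n x hx

lemma poch_le_poch {x y : ℝ} (hx : 0 < x) (hxy : x ≤ y) (n : ℕ) : poch x n ≤ poch y n := by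
  induction n with
  | zero => simp [poch_zero]
  | succ n ih =>
    rw [poch_succ, poch_succ]
    exact mul_le_mul ih (by linarith) (by positivity) ((poch_pos hx n).le.trans ih)

lemma tendsto_poch_atTop (n : ℕ) : Tendsto (fun x => poch x (n + 1)) atTop atTop := by
  have hmonic := monic_ascPochhammer ℝ (n + 1)
  refine Polynomial.tendsto_atTop_of_leadingCoeff_nonneg _ ?_ (by simp [hmonic.leadingCoeff])
  rw [Polynomial.degree_eq_natDegree hmonic.ne_zero, ascPochhammer_natDegree]
  exact_mod_cast n.succ_pos

lemma add_natCast_ne_neg_natCast {c : ℝ} (hc : ∀ k : ℕ, c ≠ -k) (m : ℕ) :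
    ∀ k : ℕ, c + m ≠ -k :=
  fun k hk => hc (k + m) (by push_cast; linarith)

/-- Where `poch x (n + 1) = 0` also `GammaSeq x n = 0`, and both sides vanish because
`_ / 0 = 0`. -/
lemma poch_succ_eq_GammaSeq (x : ℝ) {n : ℕ} (hn : n ≠ 0) :
    poch x (n + 1) = n ^ x * n.factorial / GammaSeq x n := by
  have hn0 : (0 : ℝ) < n := by positivity
  rw [GammaSeq, ← poch_eq_prod, div_div_cancel₀ (by positivity)]

/-- At a pole `s = -k` of `Γ`, `GammaSeq s n = 0` for `n ≥ k`, so its inverse is eventually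
`0 = (Γ s)⁻¹`. -/
lemma tendsto_inv_GammaSeq (s : ℝ) :
    Tendsto (fun n => (GammaSeq s n)⁻¹) atTop (𝓝 (Gamma s)⁻¹) := by
  by_cases hs : Gamma s = 0
  · obtain ⟨k, rfl⟩ := (Gamma_eq_zero_iff s).1 hs
    rw [hs, inv_zero]
    refine tendsto_const_nhds.congr' ?_
    filter_upwards [eventually_ge_atTop k] with n hn
    rw [GammaSeq, Finset.prod_eq_zero (Finset.mem_range.2 (Nat.lt_succ_of_le hn)) (by ring),
      div_zero, inv_zero]
  · exact (GammaSeq_tendsto_Gamma s).inv₀ hs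

lemma tendsto_GammaSeq_quotient (a b c : ℝ) :
    Tendsto (fun n => (GammaSeq a n)⁻¹ * (GammaSeq b n)⁻¹ * GammaSeq c n) atTop
      (𝓝 ((Gamma a)⁻¹ * (Gamma b)⁻¹ * Gamma c)) :=
  ((tendsto_inv_GammaSeq a).mul (tendsto_inv_GammaSeq b)).mul (GammaSeq_tendsto_Gamma c)

lemma tendsto_poch_quotient (a b c : ℝ) :
    Tendsto (fun m => poch (c - a) m * poch (c - b) m / (poch c m * poch (c - a - b) m)) atTop
      (𝓝 (Gamma c * Gamma (c - a - b) / (Gamma (c - a) * Gamma (c - b)))) := by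
  refine (tendsto_add_atTop_iff_nat 1).1 ?_
  have := (tendsto_GammaSeq_quotient (c - a) (c - b) c).mul (GammaSeq_tendsto_Gamma (c - a - b))
  rw [show Gamma c * Gamma (c - a - b) / (Gamma (c - a) * Gamma (c - b)) =
    (Gamma (c - a))⁻¹ * (Gamma (c - b))⁻¹ * Gamma c * Gamma (c - a - b) by ring]
  refine this.congr' ?_
  filter_upwards [eventually_ne_atTop 0] with n hn
  have hn0 : (0 : ℝ) < n := by positivity
  have := (rpow_pos_of_pos hn0 a).ne'
  have := (rpow_pos_of_pos hn0 b).ne'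
  have := (rpow_pos_of_pos hn0 c).ne'
  have : (n.factorial : ℝ) ≠ 0 := by positivity
  simp only [poch_succ_eq_GammaSeq _ hn, rpow_sub hn0, div_eq_mul_inv, mul_inv, inv_inv]
  field_simp

noncomputable def hypTerm (a b c : ℝ) (n : ℕ) : ℝ :=
  poch a n * poch b n / (poch c n * n.factorial)

lemma hyp_one_eq_tsum (a b c : ℝ) : hyp a b c 1 = ∑' n, hypTerm a b c n := by
  simp [hyp, hypTerm]

lemma hypTerm_succ_eq (a b c : ℝ) {n : ℕ} (hn : n ≠ 0) :
    hypTerm a b c (n + 1) =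
      n ^ (a + b - c) / (n + 1) * ((GammaSeq a n)⁻¹ * (GammaSeq b n)⁻¹ * GammaSeq c n) := by
  have hn0 : (0 : ℝ) < n := by positivity
  have := (rpow_pos_of_pos hn0 a).ne'
  have := (rpow_pos_of_pos hn0 b).ne'
  have := (rpow_pos_of_pos hn0 c).ne'
  have : (n.factorial : ℝ) ≠ 0 := by positivity
  rw [hypTerm, poch_succ_eq_GammaSeq a hn, poch_succ_eq_GammaSeq b hn, poch_succ_eq_GammaSeq c hn,
    rpow_sub hn0, rpow_add hn0, Nat.factorial_succ]
  push_cast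
  simp only [div_eq_mul_inv, mul_inv, inv_inv]
  field_simp

lemma hypTerm_succ_isBigO (a b c : ℝ) :
    (fun n : ℕ => hypTerm a b c (n + 1)) =O[atTop] fun n => (n : ℝ) ^ (a + b - c - 1) := by
  have hpow : (fun n : ℕ => (n : ℝ) ^ (a + b - c) / (n + 1)) =O[atTop]
      fun n => (n : ℝ) ^ (a + b - c - 1) := by
    refine IsBigO.of_bound 1 ?_
    filter_upwards [eventually_gt_atTop 0] with n hn
    have hn0 : (0 : ℝ) < n := by exact_mod_cast hn
    rw [one_mul, norm_of_nonneg (by positivity), norm_of_nonneg (by positivity),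
      rpow_sub_one hn0.ne']
    exact div_le_div_of_nonneg_left (by positivity) hn0 (by linarith)
  refine (hpow.mul ((tendsto_GammaSeq_quotient a b c).isBigO_one ℝ)).congr' ?_ ?_
  · filter_upwards [eventually_ne_atTop 0] with n hn
    rw [hypTerm_succ_eq a b c hn]
  · exact Eventually.of_forall fun n => mul_one _

lemma HasSum.eq_sub_of_tendsto {G : Type*} [AddCommGroup G] [TopologicalSpace G]
    [IsTopologicalAddGroup G] [T2Space G] {f : ℕ → G} {x l : G}
    (hs : HasSum (fun n => f n - f (n + 1)) x) (hf : Tendsto f atTop (𝓝 l)) : x = f 0 - l := by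
  refine tendsto_nhds_unique hs.tendsto_sum_nat ?_
  simp_rw [Finset.sum_range_sub']
  exact tendsto_const_nhds.sub hf

section

variable {a b c : ℝ}

lemma summable_abs_hypTerm (h : a + b < c) : Summable fun n => |hypTerm a b c n| := by
  have := summable_of_isBigO_nat' (summable_nat_rpow.2 (by linarith)) (hypTerm_succ_isBigO a b c)
  exact summable_abs_iff.2 ((summable_nat_add_iff 1).1 this)

lemma tendsto_natCast_mul_hypTerm (h : a + b < c) :
    Tendsto (fun n : ℕ => n * hypTerm a b c n) atTop (𝓝 0) := by
  refine (tendsto_add_atTop_iff_nat 1).1 ?_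
  have hpow : Tendsto (fun n : ℕ => (n : ℝ) ^ (a + b - c)) atTop (𝓝 0) := by
    rw [show a + b - c = -(c - a - b) by ring]
    exact (tendsto_rpow_neg_atTop (by linarith)).comp tendsto_natCast_atTop_atTop
  have := hpow.mul (tendsto_GammaSeq_quotient a b c)
  rw [zero_mul] at this
  refine this.congr' ?_
  filter_upwards [eventually_ne_atTop 0] with n hn
  rw [hypTerm_succ_eq a b c hn]
  push_cast
  field_simp

lemma hypTerm_contiguous (hc : ∀ k : ℕ, c ≠ -k) (n : ℕ) :
    c * (c - a - b) * hypTerm a b c n - (c - a) * (c - b) * hypTerm a b (c + 1) n =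
      c * (n * hypTerm a b c n - (n + 1) * hypTerm a b c (n + 1)) := by
  have hc0 : c ≠ 0 := by simpa using hc 0
  have hcn : c + n ≠ 0 := fun h => hc n (by linarith)
  have hpoch : poch (c + 1) n = poch c n * (c + n) / c := by
    rw [eq_div_iff hc0, ← poch_succ, poch_succ', mul_comm]
  have := poch_ne_zero hc n
  have : (n.factorial : ℝ) ≠ 0 := by positivity
  unfold hypTerm
  rw [hpoch, poch_succ a, poch_succ b, poch_succ c, Nat.factorial_succ]
  push_cast
  field_simp
  ring

lemma hyp_one_eq_mul_hyp_one_add_one (hc : ∀ k : ℕ, c ≠ -k) (h : a + b < c) :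
    hyp a b c 1 = (c - a) * (c - b) / (c * (c - a - b)) * hyp a b (c + 1) 1 := by
  have hc0 : c ≠ 0 := by simpa using hc 0
  have hcab : c - a - b ≠ 0 := by linarith
  have hS := (summable_abs_hypTerm h).of_abs.hasSum
  have hS1 := (summable_abs_hypTerm (a := a) (b := b) (c := c + 1) (by linarith)).of_abs.hasSum
  have htel := ((hS.mul_left (c * (c - a - b))).sub (hS1.mul_left ((c - a) * (c - b)))).congr_fun
    (g := fun n => c * (n * hypTerm a b c n) - c * ((n + 1 : ℕ) * hypTerm a b c (n + 1)))
    fun n => by rw [hypTerm_contiguous hc, mul_sub]; push_cast; ring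
  have hzero := htel.eq_sub_of_tendsto ((tendsto_natCast_mul_hypTerm h).const_mul c)
  rw [hyp_one_eq_tsum, hyp_one_eq_tsum, div_mul_eq_mul_div, eq_div_iff (mul_ne_zero hc0 hcab)]
  simp only [CharP.cast_eq_zero, zero_mul, mul_zero, sub_zero] at hzero
  linear_combination hzero

lemma hyp_one_eq_mul_hyp_one_add_natCast (hc : ∀ k : ℕ, c ≠ -k) (h : a + b < c) (m : ℕ) :
    hyp a b c 1 =
      poch (c - a) m * poch (c - b) m / (poch c m * poch (c - a - b) m) * hyp a b (c + m) 1 := by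
  induction m with
  | zero => simp [poch_zero]
  | succ m ih =>
    have hm : a + b < c + m := by have : (0 : ℝ) ≤ m := m.cast_nonneg; linarith
    rw [ih, hyp_one_eq_mul_hyp_one_add_one (add_natCast_ne_neg_natCast hc m) hm, ← mul_assoc,
      div_mul_div_comm, poch_succ, poch_succ, poch_succ, poch_succ, Nat.cast_succ, ← add_assoc]
    congr 2 <;> ring

lemma abs_hypTerm_le_of_le {d : ℝ} (hc : 0 < c) (hcd : c ≤ d) (n : ℕ) :
    |hypTerm a b d n| ≤ |hypTerm a b c n| := by
  have hpc := poch_pos hc n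
  have hpd := hpc.trans_le (poch_le_poch hc hcd n)
  have : (0 : ℝ) < n.factorial := by positivity
  simp only [hypTerm, abs_div, abs_mul, abs_of_pos hpc, abs_of_pos hpd, Nat.abs_cast]
  gcongr
  exact poch_le_poch hc hcd n

end

lemma tendsto_hypTerm_atTop (a b : ℝ) (n : ℕ) :
    Tendsto (fun x => hypTerm a b x n) atTop (𝓝 (if n = 0 then 1 else 0)) := by
  rcases n with _ | n
  · simp [hypTerm, poch_zero]
  · rw [if_neg n.succ_ne_zero]
    have := (tendsto_poch_atTop n).inv_tendsto_atTop.const_mul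
      (poch a (n + 1) * poch b (n + 1) / (n + 1).factorial)
    rw [mul_zero] at this
    refine this.congr fun x => ?_
    simp only [hypTerm, Pi.inv_apply]
    ring

lemma tendsto_hyp_one_add_natCast (a b c : ℝ) :
    Tendsto (fun m : ℕ => hyp a b (c + m) 1) atTop (𝓝 1) := by
  have hx : Tendsto (fun m : ℕ => c + m) atTop atTop :=
    tendsto_atTop_add_const_left _ _ tendsto_natCast_atTop_atTop
  set c₀ := |a| + |b| + 1
  have hc₀ : a + b < c₀ := by linarith [le_abs_self a, le_abs_self b]
  simp only [hyp_one_eq_tsum]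
  have := tendsto_tsum_of_dominated_convergence (summable_abs_hypTerm hc₀)
    (fun n => (tendsto_hypTerm_atTop a b n).comp hx) ?_
  · simpa using this
  · filter_upwards [hx.eventually_ge_atTop c₀] with m hm n
    exact abs_hypTerm_le_of_le (by positivity) hm n

/-- Gauss's summation theorem: for `C > A + B` and `C` not a nonpositive integer,
the hypergeometric series converges absolutely at `z = 1` and
`₂F₁(A,B,C;1) = Γ(C)Γ(C−A−B)/(Γ(C−A)Γ(C−B))`. -/
theorem gauss_summation (A B C : ℝ) (hC : ∀ k : ℕ, C ≠ -(k : ℝ)) (hsum : A + B < C) :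
    Summable (fun n : ℕ => |poch A n * poch B n / (poch C n * (n.factorial : ℝ)) * (1 : ℝ) ^ n|) ∧
    hyp A B C 1 =
      Real.Gamma C * Real.Gamma (C - A - B) / (Real.Gamma (C - A) * Real.Gamma (C - B)) := by
  refine ⟨by simpa [hypTerm] using summable_abs_hypTerm hsum, ?_⟩
  have hlim := (tendsto_poch_quotient A B C).mul (tendsto_hyp_one_add_natCast A B C)
  rw [mul_one] at hlim
  exact tendsto_nhds_unique
    (tendsto_const_nhds.congr (hyp_one_eq_mul_hyp_one_add_natCast hC hsum)) hlim
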